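/- Let G be a finite group, let U be a subgroup of G, and let A be a subgroup of Aut(G) with Inn(G) ≤ A and |A : Inn(G)| = n. Assume that there exists a minimal A-invariant subgroup L of G that is abelian and satisfies G = UL. If G = ⋃_{a ∈ A} U^a, then |G : U| ≤ n. -/

import Mathlib

/-!
Since `L` is abelian, normal and `G = UL`, the subgroup `U ∩ L` is normalised by both `U` and `L`,
hence is normal in `G`. Consequently `(U ∩ L)^a` depends only on the class of `a` in
`A / Inn(G)`, so choosing representatives `a₁, …, aₙ`, every `x = u^a ∈ L` lies in one of the `n`
subgroups `U^{aᵢ} ∩ L`. Each of these has index `|L : U^{aᵢ} ∩ L| = |G : U^{aᵢ}| = |G : U|` in `L`,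
because `G = U^{aᵢ} L`, and by B. H. Neumann's lemma a group covered by `n` subgroups has one of
index at most `n`.
-/

namespace Subgroup

variable {G : Type*} [Group G]

theorem relIndex_eq_index_of_sup_eq_top {H N : Subgroup G} [N.Normal] (hHN : H ⊔ N = ⊤) :
    H.relIndex N = H.index := by
  rw [← relIndex_top_right]
  refine Nat.card_congr (Equiv.ofBijective (quotientSubgroupOfEmbeddingOfLE H le_top)
    ⟨(quotientSubgroupOfEmbeddingOfLE H le_top).injective, fun q => ?_⟩)
  induction q using QuotientGroup.induction_on with | H g => ?_
  have hg : (g : G) ∈ N ⊔ H := by rw [sup_comm, hHN]; exact mem_top _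
  obtain ⟨x, hx, h, hh, hxh⟩ := mem_sup_of_normal_left.mp hg
  refine ⟨QuotientGroup.mk ⟨x, hx⟩, ?_⟩
  rw [quotientSubgroupOfEmbeddingOfLE_apply_mk, QuotientGroup.eq, mem_subgroupOf]
  simpa [← hxh] using hh

theorem relIndex_map_eq_index_of_sup_eq_top {H N : Subgroup G} [N.Normal] (hHN : H ⊔ N = ⊤)
    (e : MulAut G) (he : N.map e.toMonoidHom = N) :
    (H.map e.toMonoidHom).relIndex N = H.index := by
  have hsup : H.map e.toMonoidHom ⊔ N = ⊤ := by
    rw [← he, ← Subgroup.map_sup, hHN, map_top_of_surjective _ e.surjective]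
  rw [relIndex_eq_index_of_sup_eq_top hsup]
  exact index_map_equiv H e

theorem normal_inf_of_sup_eq_top {H N : Subgroup G} [hN : N.Normal]
    (hNcomm : ∀ x ∈ N, ∀ y ∈ N, x * y = y * x) (hHN : H ⊔ N = ⊤) : (H ⊓ N).Normal where
  conj_mem x hx g := by
    obtain ⟨h, hh, y, hy, rfl⟩ := mem_sup_of_normal_right.mp (hHN ▸ mem_top g)
    have hconj : h * y * x * (h * y)⁻¹ = h * x * h⁻¹ := by
      calc h * y * x * (h * y)⁻¹ = h * (y * x) * y⁻¹ * h⁻¹ := by group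
        _ = h * x * h⁻¹ := by rw [hNcomm y hy x hx.2]; group
    exact ⟨hconj ▸ H.mul_mem (H.mul_mem hh hx.1) (H.inv_mem hh), hN.conj_mem x hx.2 _⟩

theorem map_eq_map_of_inv_mul_mem_range_conj (N : Subgroup G) [N.Normal] {a b : MulAut G}
    (hab : a⁻¹ * b ∈ (MulAut.conj : G →* MulAut G).range) :
    N.map b.toMonoidHom = N.map a.toMonoidHom := by
  obtain ⟨g, hg⟩ := hab
  obtain rfl : b = a * MulAut.conj g := by rw [hg, mul_inv_cancel_left]
  conv_rhs => rw [← Normal.map_conj_eq N g, map_map]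
  rfl

theorem exists_mem_subgroupOf_map_out {A : Subgroup (MulAut G)} {H N : Subgroup G}
    [(H ⊓ N).Normal] (hN : ∀ a ∈ A, N.map a.toMonoidHom = N)
    (hcov : ∀ x : G, ∃ a ∈ A, ∃ h ∈ H, a h = x) (x : N) :
    ∃ q : A ⧸ (MulAut.conj : G →* MulAut G).range.subgroupOf A,
      x ∈ (H.map (q.out : MulAut G).toMonoidHom).subgroupOf N := by
  obtain ⟨a, ha, h, hh, hx⟩ := hcov x
  have hhN : h ∈ N := by
    have hxN : (x : G) ∈ N.map a.toMonoidHom := (hN a ha).symm ▸ x.2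
    rwa [mem_map_equiv, ← hx, MulEquiv.symm_apply_apply] at hxN
  set q := (QuotientGroup.mk ⟨a, ha⟩ : A ⧸ (MulAut.conj : G →* MulAut G).range.subgroupOf A)
  have hq : (H ⊓ N).map a.toMonoidHom = (H ⊓ N).map (q.out : MulAut G).toMonoidHom :=
    map_eq_map_of_inv_mul_mem_range_conj _
      (mem_subgroupOf.mp (QuotientGroup.eq.mp (QuotientGroup.out_eq' q)))
  refine ⟨q, map_mono (inf_le_left : H ⊓ N ≤ H) ?_⟩
  rw [← hq]
  exact ⟨h, ⟨hh, hhN⟩, hx⟩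

end Subgroup

theorem index_le_of_abelian_minimal_supplement_general (G : Type*) [Group G] [Finite G]
    (U : Subgroup G) (A : Subgroup (MulAut G)) (n : ℕ)
    (hInn : (MulAut.conj : G →* MulAut G).range ≤ A)
    (hn : Subgroup.relIndex (MulAut.conj : G →* MulAut G).range A = n)
    (L : Subgroup G)
    (hLinv : ∀ a ∈ A, Subgroup.map (MulEquiv.toMonoidHom a) L = L)
    (hLab : ∀ x ∈ L, ∀ y ∈ L, x * y = y * x)
    (hUL : ∀ x : G, ∃ u ∈ U, ∃ l ∈ L, u * l = x)
    (hcov : ∀ x : G, ∃ a ∈ A, ∃ u ∈ U, a u = x) :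
    U.index ≤ n := by
  have hLnormal : L.Normal :=
    Subgroup.normal_iff_map_conj_eq.mpr fun g => hLinv _ (hInn ⟨g, rfl⟩)
  have hUL_top : U ⊔ L = ⊤ := eq_top_iff.mpr fun x _ => by
    obtain ⟨u, hu, l, hl, rfl⟩ := hUL x
    exact Subgroup.mul_mem_sup hu hl
  have := Subgroup.normal_inf_of_sup_eq_top hLab hUL_top
  let Q := A ⧸ (MulAut.conj : G →* MulAut G).range.subgroupOf A
  have : Fintype Q := Fintype.ofFinite Q
  obtain ⟨q, -, -, hq⟩ := Subgroup.exists_index_le_card_of_leftCoset_cover (s := Finset.univ)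
    (g := 1) (H := fun q : Q => (U.map (q.out : MulAut G).toMonoidHom).subgroupOf L)
    (by simpa [Set.eq_univ_iff_forall] using Subgroup.exists_mem_subgroupOf_map_out hLinv hcov)
  calc U.index = (U.map (q.out : MulAut G).toMonoidHom).relIndex L :=
        (Subgroup.relIndex_map_eq_index_of_sup_eq_top hUL_top _ (hLinv _ q.out.2)).symm
    _ ≤ Fintype.card Q := hq
    _ = n := by rw [← Nat.card_eq_fintype_card]; exact hn

/-- Let `G` be a finite group, `U ≤ G`, and `Inn(G) ≤ A ≤ Aut(G)` with `|A : Inn(G)| = n`.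
If there is a minimal `A`-invariant subgroup `L` of `G` that is abelian and satisfies
`G = UL`, and `G` is the union of the `A`-conjugates of `U`, then `|G : U| ≤ n`. -/
theorem index_le_of_abelian_minimal_supplement (G : Type*) [Group G] [Finite G]
    (U : Subgroup G) (A : Subgroup (MulAut G)) (n : ℕ)
    (hInn : (MulAut.conj : G →* MulAut G).range ≤ A)
    (hn : Subgroup.relIndex (MulAut.conj : G →* MulAut G).range A = n)
    (L : Subgroup G)
    (hLne : L ≠ ⊥)
    (hLinv : ∀ a ∈ A, Subgroup.map (MulEquiv.toMonoidHom a) L = L)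
    (hLmin : ∀ N : Subgroup G, (∀ a ∈ A, Subgroup.map (MulEquiv.toMonoidHom a) N = N) →
      N < L → N = ⊥)
    (hLab : ∀ x ∈ L, ∀ y ∈ L, x * y = y * x)
    (hUL : ∀ x : G, ∃ u ∈ U, ∃ l ∈ L, u * l = x)
    (hcov : ∀ x : G, ∃ a ∈ A, ∃ u ∈ U, a u = x) :
    U.index ≤ n :=
  index_le_of_abelian_minimal_supplement_general G U A n hInn hn L hLinv hLab hUL hcov
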